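/- Let ω = s₁s₂s₃⋯ be an infinite reduced word on S with prefixes w_i = s₁⋯s_i, and let N(ω) = ⋃_{i∈ℕ} N(w_i). Then N(ω) is separable: cone(N(ω)) ∩ cone(Φ⁺ \ N(ω)) = {0}. -/

import Mathlib

open Pointwise

noncomputable section

/-- The set of nonnegative linear combinations of elements of `X`. -/
def coneOf {V : Type*} [AddCommGroup V] [Module ℝ V] (X : Set V) : Set V :=
  {v | ∃ (n : ℕ) (c : Fin n → ℝ) (f : Fin n → V),
    (∀ i, 0 ≤ c i) ∧ (∀ i, f i ∈ X) ∧ ∑ i, c i • f i = v}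

/-- A geometric representation of the Coxeter system `cs` on the real quadratic
space `(V, bil)`: each simple generator acts as the `bil`-reflection in its simple
root, and the simple roots form a simple system. -/
structure GeomRep {B : Type*} [Fintype B] {W : Type*} [Group W]
    (M : CoxeterMatrix B) (cs : CoxeterSystem M W)
    (V : Type*) [AddCommGroup V] [Module ℝ V] where
  /-- the symmetric bilinear form -/
  bil : LinearMap.BilinForm ℝ V
  bil_symm : ∀ u v : V, bil u v = bil v u
  /-- the representation of `W` by linear automorphisms of `V` -/
  π : W →* (V ≃ₗ[ℝ] V)
  /-- the simple roots -/
  α : B → V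
  norm_one : ∀ i, bil (α i) (α i) = 1
  simple_refl : ∀ i v, π (cs.simple i) v = v - (2 * bil (α i) v) • α i
  pos_indep : ∀ c : B → ℝ, (∀ i, 0 ≤ c i) → ∑ i, c i • α i = 0 → ∀ i, c i = 0
  angle_finite : ∀ i j, i ≠ j → M.M i j ≠ 0 →
    bil (α i) (α j) = - Real.cos (Real.pi / (M.M i j : ℝ))
  angle_infinite : ∀ i j, i ≠ j → M.M i j = 0 → bil (α i) (α j) ≤ -1

namespace GeomRep

variable {B : Type*} [Fintype B] {W : Type*} [Group W]
  {M : CoxeterMatrix B} {cs : CoxeterSystem M W}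
  {V : Type*} [AddCommGroup V] [Module ℝ V]

/-- The root system `Φ = W(Δ)`. -/
def Phi (G : GeomRep M cs V) : Set V := {v | ∃ (w : W) (i : B), G.π w (G.α i) = v}

/-- The positive roots `Φ⁺ = cone(Δ) ∩ Φ`. -/
def PhiPos (G : GeomRep M cs V) : Set V := G.Phi ∩ coneOf (Set.range G.α)

/-- The (left) inversion set `N(w) = Φ⁺ ∩ w(Φ⁻)`. -/
def N (G : GeomRep M cs V) (w : W) : Set V := G.PhiPos ∩ (G.π w '' (-G.PhiPos))

/-- `A ⊆ Φ⁺` is closed if for all `α, β ∈ A`, every root in `cone(α,β)` lies in `A`. -/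
def IsClosedSet (G : GeomRep M cs V) (A : Set V) : Prop :=
  ∀ a ∈ A, ∀ b ∈ A, coneOf {a, b} ∩ G.Phi ⊆ A

/-- `A` is biclosed if `A` and `Φ⁺ \ A` are both closed. -/
def IsBiclosed (G : GeomRep M cs V) (A : Set V) : Prop :=
  G.IsClosedSet A ∧ G.IsClosedSet (G.PhiPos \ A)

/-- `A` is convex if `A = cone(A) ∩ Φ`. -/
def IsConvexSet (G : GeomRep M cs V) (A : Set V) : Prop :=
  A = coneOf A ∩ G.Phi

/-- `A` is biconvex if `A` and `Φ⁺ \ A` are both convex. -/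
def IsBiconvex (G : GeomRep M cs V) (A : Set V) : Prop :=
  G.IsConvexSet A ∧ G.IsConvexSet (G.PhiPos \ A)

/-- `A ⊆ Φ⁺` is separable if `cone(A) ∩ cone(Φ⁺ \ A) = {0}`. -/
def IsSeparable (G : GeomRep M cs V) (A : Set V) : Prop :=
  coneOf A ∩ coneOf (G.PhiPos \ A) = {0}

end GeomRep

/-- The right weak order on a Coxeter group. -/
def WeakLE {B : Type*} {W : Type*} [Group W] {M : CoxeterMatrix B}
    (cs : CoxeterSystem M W) (u w : W) : Prop :=
  cs.length u + cs.length (u⁻¹ * w) = cs.length w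

/-!
Applying `w⁻¹` sends `cone(N(w))` into `-cone(Δ)` and `cone(Φ⁺ \ N(w))` into `cone(Δ)`, and
`cone(Δ) ∩ -cone(Δ) = 0`; so every finite inversion set is separable. The second inclusion needs
`Φ = Φ⁺ ∪ -Φ⁺`, i.e. Humphreys' theorem that `ℓ(w sᵢ) > ℓ(w)` forces `w αᵢ ∈ cone(Δ)`. It is proved
by induction on `ℓ(w)`, factoring `w = v u` with `u` in a rank-two parabolic subgroup `⟨sᵢ, sⱼ⟩`
and `v` of minimal length; `u αᵢ` then has Chebyshev coefficients `Uₙ(-B(αᵢ, αⱼ)) ≥ 0`.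
Along a reduced infinite word the sets `N(wᵢ)` increase, and the cone of a directed union is the
union of the cones, so separability passes to `N(ω)`.
-/

theorem coneOf_eq_hull {V : Type*} [AddCommGroup V] [Module ℝ V] (X : Set V) :
    coneOf X = PointedCone.hull ℝ X := by
  ext v
  rw [SetLike.mem_coe, Submodule.mem_span_set']
  constructor
  · rintro ⟨n, c, f, hc, hf, rfl⟩
    exact ⟨n, fun i => ⟨c i, hc i⟩, fun i => ⟨f i, hf i⟩, rfl⟩
  · rintro ⟨n, c, f, rfl⟩
    exact ⟨n, fun i => c i, fun i => f i, fun i => (c i).2, fun i => (f i).2, rfl⟩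

section Cone

variable {V V' : Type*} [AddCommGroup V] [Module ℝ V] [AddCommGroup V'] [Module ℝ V']

theorem zero_mem_coneOf (X : Set V) : 0 ∈ coneOf X := by
  rw [coneOf_eq_hull]
  exact zero_mem _

theorem coneOf_mono {X Y : Set V} (h : X ⊆ Y) : coneOf X ⊆ coneOf Y := by
  simp only [coneOf_eq_hull, SetLike.coe_subset_coe]
  exact Submodule.span_mono h

theorem map_mem_of_mem_coneOf (f : V →ₗ[ℝ] V') {X : Set V} {C : PointedCone ℝ V'}
    (h : ∀ x ∈ X, f x ∈ C) {v : V} (hv : v ∈ coneOf X) : f v ∈ C := by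
  rw [coneOf_eq_hull] at hv
  exact (Submodule.span_le (p := C.comap f)).2 h hv

theorem mem_coneOf_iUnion_of_directed {ι : Type*} [Nonempty ι] {A : ι → Set V}
    (hA : Directed (· ⊆ ·) A) {v : V} (hv : v ∈ coneOf (⋃ k, A k)) : ∃ k, v ∈ coneOf (A k) := by
  simp only [coneOf_eq_hull, SetLike.mem_coe, Submodule.span_iUnion] at hv ⊢
  exact (Submodule.mem_iSup_of_directed _ (hA.mono_comp _ fun _ _ h => Submodule.span_mono h)).1 hv

end Cone

namespace Polynomial.Chebyshev

theorem U_eval_nonneg_of_one_le {c : ℝ} (hc : 1 ≤ c) {n : ℤ} (hn : -1 ≤ n) :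
    0 ≤ (U ℝ n).eval c := by
  have hmono : ∀ k : ℕ, 0 ≤ (U ℝ (k - 1)).eval c ∧ (U ℝ (k - 1)).eval c ≤ (U ℝ k).eval c := by
    intro k
    induction k with
    | zero => simp
    | succ k ih =>
      have hrec := U_add_one ℝ k
      push_cast
      simp only [add_sub_cancel_right, hrec, eval_sub, eval_mul, eval_ofNat, eval_X]
      constructor <;> nlinarith
  obtain ⟨k, hk⟩ := Int.eq_ofNat_of_zero_le (by omega : 0 ≤ n + 1)
  simpa [show n = k - 1 by omega] using (hmono k).1

theorem U_eval_cos_pi_div_nonneg {m : ℕ} (hm : 2 ≤ m) {n : ℤ} (h1 : -1 ≤ n) (h2 : n < m) :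
    0 ≤ (U ℝ n).eval (Real.cos (Real.pi / m)) := by
  have hm' : (2 : ℝ) ≤ m := by exact_mod_cast hm
  have hθ : 0 < Real.pi / m := by positivity
  have hsin : 0 < Real.sin (Real.pi / m) :=
    Real.sin_pos_of_pos_of_lt_pi hθ (div_lt_self Real.pi_pos (by linarith))
  refine nonneg_of_mul_nonneg_left ?_ hsin
  rw [U_real_cos]
  have h1' : (0 : ℝ) ≤ n + 1 := by exact_mod_cast (by omega : (0 : ℤ) ≤ n + 1)
  have h2' : (n : ℝ) + 1 ≤ m := by exact_mod_cast (by omega : n + 1 ≤ (m : ℤ))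
  apply Real.sin_nonneg_of_nonneg_of_le_pi (by positivity)
  calc ((n : ℝ) + 1) * (Real.pi / m) ≤ m * (Real.pi / m) := by gcongr
    _ = Real.pi := by field_simp

end Polynomial.Chebyshev

namespace CoxeterSystem

variable {B W : Type*} [Group W] {M : CoxeterMatrix B} (cs : CoxeterSystem M W)

theorem isRightDescent_mul_of_length_mul_eq {v u : W} {i : B}
    (h : cs.length (v * u) = cs.length v + cs.length u) (hu : cs.IsRightDescent u i) :
    cs.IsRightDescent (v * u) i := by
  unfold IsRightDescent at hu ⊢
  have := cs.length_mul_le v (u * cs.simple i)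
  rw [mul_assoc]
  omega

variable {cs}

theorem IsReduced.isRightDescent_of_getLast?_eq {l : List B} {i : B} (hl : cs.IsReduced l)
    (hi : l.getLast? = some i) : cs.IsRightDescent (cs.wordProd l) i := by
  obtain ⟨l', rfl⟩ := List.getLast?_eq_some_iff.1 hi
  have := cs.length_wordProd_le l'
  rw [IsRightDescent, hl.eq, cs.wordProd_append, cs.wordProd_singleton,
    cs.simple_mul_simple_cancel_right, List.length_append, List.length_singleton]
  omega

theorem IsReduced.not_isRightDescent_of_append_singleton {l : List B} {i : B}
    (hl : cs.IsReduced (l ++ [i])) : ¬ cs.IsRightDescent (cs.wordProd l) i := by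
  have h := hl.eq
  rw [cs.wordProd_append, cs.wordProd_singleton, List.length_append, List.length_singleton] at h
  have := cs.length_wordProd_le l
  rw [IsRightDescent]
  omega

theorem eq_alternatingWord_of_isReduced {l : List B} :
    ∀ {i j : B}, cs.IsReduced l → (∀ b ∈ l, b = i ∨ b = j) → l.getLast? ≠ some i →
      l = alternatingWord i j l.length := by
  induction l using List.reverseRecOn with
  | nil => intros; rfl
  | append_singleton l x ih =>
    intro i j hl hmem hlast
    have hx : x = j :=
      (hmem x (by simp)).resolve_left (by rintro rfl; simp at hlast)
    subst hx
    have hl' : cs.IsReduced l := by simpa using hl.take l.length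
    have hl'last : l.getLast? ≠ some x := fun h =>
      hl.not_isRightDescent_of_append_singleton (hl'.isRightDescent_of_getLast?_eq h)
    rw [ih hl' (fun b hb => (hmem b (by simp [hb])).symm) hl'last, List.length_append,
      List.length_singleton, alternatingWord_succ, List.concat_eq_append, length_alternatingWord]

theorem lt_of_isReduced_alternatingWord {i j : B} {r : ℕ} (hM : M i j ≠ 0)
    (hr : cs.IsReduced (alternatingWord i j r))
    (hi : ¬ cs.IsRightDescent (cs.wordProd (alternatingWord i j r)) i) : r < M i j := by
  have hle : r ≤ M i j := by
    by_contra h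
    exact cs.not_isReduced_alternatingWord i j hM (by omega) hr
  refine lt_of_le_of_ne hle fun hrM => hi ?_
  subst hrM
  obtain ⟨m, hm⟩ := Nat.exists_eq_add_one_of_ne_zero hM
  have hbraid : cs.wordProd (alternatingWord i j (M i j))
      = cs.wordProd (alternatingWord i j m) * cs.simple i := by
    rw [← braidWord, cs.wordProd_braidWord_eq, braidWord, M.symmetric, hm, alternatingWord_succ,
      cs.wordProd_concat]
  have := cs.length_wordProd_le (alternatingWord i j m)
  rw [IsRightDescent, hr.eq, hbraid, cs.simple_mul_simple_cancel_right]
  simp only [length_alternatingWord] at this ⊢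
  omega

theorem exists_mul_wordProd_of_isRightDescent {w : W} {j : B} (hj : cs.IsRightDescent w j)
    (i : B) : ∃ (v : W) (l : List B), w = v * cs.wordProd l ∧
      cs.length v + l.length = cs.length w ∧ cs.length v < cs.length w ∧
      (∀ b ∈ l, b = i ∨ b = j) ∧ ¬ cs.IsRightDescent v i ∧ ¬ cs.IsRightDescent v j := by
  classical
  let P : ℕ → Prop := fun k => ∃ (v : W) (l : List B), w = v * cs.wordProd l ∧
    cs.length v = k ∧ k + l.length = cs.length w ∧ ∀ b ∈ l, b = i ∨ b = j
  have hPj : P (cs.length (w * cs.simple j)) := by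
    refine ⟨w * cs.simple j, [j], ?_, rfl, ?_, by simp⟩
    · rw [cs.wordProd_singleton, cs.simple_mul_simple_cancel_right]
    · simpa [isRightDescent_iff] using hj
  have hex : ∃ k, P k := ⟨_, hPj⟩
  obtain ⟨v, l, hw, hv, hlen, hmem⟩ := Nat.find_spec hex
  have hasc : ∀ c, c = i ∨ c = j → ¬ cs.IsRightDescent v c := by
    intro c hc hdesc
    rw [isRightDescent_iff] at hdesc
    refine Nat.find_min hex (m := cs.length (v * cs.simple c)) (by omega)
      ⟨v * cs.simple c, c :: l, ?_, rfl, ?_, ?_⟩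
    · rw [hw, cs.wordProd_cons, mul_assoc, cs.simple_mul_simple_cancel_left]
    · simp only [List.length_cons]
      omega
    · simpa [hc] using hmem
  have hmin := Nat.find_min' hex hPj
  refine ⟨v, l, hw, hv ▸ hlen, ?_, hmem, hasc i (.inl rfl), hasc j (.inr rfl)⟩
  rw [IsRightDescent] at hj
  omega

end CoxeterSystem

namespace GeomRep

open Polynomial Polynomial.Chebyshev

variable {B : Type*} [Fintype B] {W : Type*} [Group W]
  {M : CoxeterMatrix B} {cs : CoxeterSystem M W}
  {V : Type*} [AddCommGroup V] [Module ℝ V] (G : GeomRep M cs V)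

/-- `cone(Δ)`, taken as a pointed cone so that the `Submodule` API applies to it. -/
def rootCone : PointedCone ℝ V := PointedCone.hull ℝ (Set.range G.α)

theorem mem_PhiPos_iff {x : V} : x ∈ G.PhiPos ↔ x ∈ G.Phi ∧ x ∈ G.rootCone := by
  rw [PhiPos, coneOf_eq_hull]
  rfl

theorem mem_rootCone_iff {x : V} :
    x ∈ G.rootCone ↔ ∃ c : B → ℝ, (∀ b, 0 ≤ c b) ∧ ∑ b, c b • G.α b = x := by
  rw [rootCone, Submodule.mem_span_range_iff_exists_fun]
  constructor
  · rintro ⟨c, rfl⟩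
    exact ⟨fun b => c b, fun b => (c b).2, by simp only [Nonneg.coe_smul]⟩
  · rintro ⟨c, hc, rfl⟩
    exact ⟨fun b => ⟨c b, hc b⟩, by simp only [Nonneg.mk_smul]⟩

theorem simpleRoot_mem_rootCone (i : B) : G.α i ∈ G.rootCone :=
  PointedCone.subset_hull (Set.mem_range_self i)

@[simp]
theorem π_mul_apply (w₁ w₂ : W) (v : V) : G.π (w₁ * w₂) v = G.π w₁ (G.π w₂ v) := by
  rw [map_mul, LinearEquiv.mul_apply]

@[simp]
theorem π_apply_π_inv_apply (w : W) (v : V) : G.π w (G.π w⁻¹ v) = v := by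
  rw [← π_mul_apply, mul_inv_cancel, map_one]
  rfl

theorem π_simple_simpleRoot (i : B) : G.π (cs.simple i) (G.α i) = -G.α i := by
  rw [G.simple_refl, G.norm_one]
  module

theorem bil_π_simple (i : B) (a b : V) :
    G.bil (G.π (cs.simple i) a) (G.π (cs.simple i) b) = G.bil a b := by
  simp only [G.simple_refl, map_sub, map_smul, LinearMap.sub_apply, LinearMap.smul_apply,
    smul_eq_mul, G.norm_one, G.bil_symm _ (G.α i)]
  ring

theorem bil_π_π (w : W) (a b : V) : G.bil (G.π w a) (G.π w b) = G.bil a b := by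
  induction w using cs.simple_induction_left generalizing a b with
  | one => simp
  | mul_simple_left w i ih => rw [π_mul_apply, π_mul_apply, bil_π_simple, ih]

theorem π_apply_mem_Phi (w : W) {x : V} (hx : x ∈ G.Phi) : G.π w x ∈ G.Phi := by
  obtain ⟨w', i, rfl⟩ := hx
  exact ⟨w * w', i, π_mul_apply ..⟩

theorem bil_self_of_mem_Phi {x : V} (hx : x ∈ G.Phi) : G.bil x x = 1 := by
  obtain ⟨w, i, rfl⟩ := hx
  rw [bil_π_π, G.norm_one]

theorem ne_zero_of_mem_Phi {x : V} (hx : x ∈ G.Phi) : x ≠ 0 := by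
  rintro rfl
  simpa using G.bil_self_of_mem_Phi hx

theorem π_simple_apply_smul_add_smul (i j : B) (a b : ℝ) :
    G.π (cs.simple j) (a • G.α i + b • G.α j)
      = a • G.α i + (2 * -G.bil (G.α i) (G.α j) * a - b) • G.α j := by
  rw [G.simple_refl]
  simp only [map_add, map_smul, smul_eq_mul, G.norm_one, G.bil_symm (G.α j) (G.α i)]
  module

theorem π_alternatingWord_even (i j : B) (k : ℕ) :
    G.π (cs.wordProd (CoxeterSystem.alternatingWord i j (2 * k))) (G.α i)
      = (U ℝ (2 * k)).eval (-G.bil (G.α i) (G.α j)) • G.α i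
        + (U ℝ (2 * k - 1)).eval (-G.bil (G.α i) (G.α j)) • G.α j := by
  induction k with
  | zero => simp [CoxeterSystem.alternatingWord]
  | succ k ih =>
    have hodd : ¬ Even (2 * k + 1) := Nat.not_even_iff_odd.2 (odd_two_mul_add_one k)
    rw [show 2 * (k + 1) = 2 * k + 1 + 1 by ring, CoxeterSystem.alternatingWord_succ',
      if_neg hodd, CoxeterSystem.alternatingWord_succ', if_pos (even_two_mul k),
      cs.wordProd_cons, cs.wordProd_cons, π_mul_apply, π_mul_apply, ih,
      π_simple_apply_smul_add_smul, add_comm, π_simple_apply_smul_add_smul, add_comm, G.bil_symm]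
    push_cast
    rw [show 2 * ((k : ℤ) + 1) = 2 * k + 2 by ring, add_sub_assoc, show (2 : ℤ) - 1 = 1 by norm_num,
      U_add_two, U_add_one]
    simp only [eval_sub, eval_mul, eval_ofNat, eval_X]

theorem π_alternatingWord_odd (i j : B) (k : ℕ) :
    G.π (cs.wordProd (CoxeterSystem.alternatingWord i j (2 * k + 1))) (G.α i)
      = (U ℝ (2 * k)).eval (-G.bil (G.α i) (G.α j)) • G.α i
        + (U ℝ (2 * k + 1)).eval (-G.bil (G.α i) (G.α j)) • G.α j := by
  rw [CoxeterSystem.alternatingWord_succ', if_pos (even_two_mul k), cs.wordProd_cons,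
    π_mul_apply, π_alternatingWord_even, π_simple_apply_smul_add_smul, U_add_one]
  simp only [eval_sub, eval_mul, eval_ofNat, eval_X]

theorem exists_π_alternatingWord_eq_smul_add_smul {i j : B} (hij : i ≠ j) {r : ℕ}
    (hr : M i j = 0 ∨ r < M i j) : ∃ p q : ℝ, 0 ≤ p ∧ 0 ≤ q ∧
      G.π (cs.wordProd (CoxeterSystem.alternatingWord i j r)) (G.α i) = p • G.α i + q • G.α j := by
  have hU : ∀ n : ℤ, -1 ≤ n → n ≤ r → 0 ≤ (U ℝ n).eval (-G.bil (G.α i) (G.α j)) := by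
    rcases hr with hM | hr
    · intro n hn _
      exact U_eval_nonneg_of_one_le (by linarith [G.angle_infinite i j hij hM]) hn
    · intro n hn hnr
      have h2 : 2 ≤ M i j := by have := M.off_diagonal i j hij; omega
      rw [G.angle_finite i j hij (by omega), neg_neg]
      exact U_eval_cos_pi_div_nonneg h2 hn (by omega)
  obtain ⟨k, rfl | rfl⟩ := Nat.even_or_odd' r
  · exact ⟨_, _, hU _ (by omega) (by push_cast; omega), hU _ (by omega) (by push_cast; omega),
      G.π_alternatingWord_even i j k⟩
  · exact ⟨_, _, hU _ (by omega) (by push_cast; omega), hU _ (by omega) (by push_cast; omega),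
      G.π_alternatingWord_odd i j k⟩

theorem π_simpleRoot_mem_rootCone {w : W} {i : B} (hw : ¬ cs.IsRightDescent w i) :
    G.π w (G.α i) ∈ G.rootCone := by
  induction hn : cs.length w using Nat.strong_induction_on generalizing w i with
  | _ n ih =>
  obtain rfl | hne := eq_or_ne w 1
  · simpa using G.simpleRoot_mem_rootCone i
  obtain ⟨j, hj⟩ := cs.exists_rightDescent_of_ne_one hne
  have hij : i ≠ j := by rintro rfl; exact hw hj
  obtain ⟨v, l, rfl, hlen, hlt, hmem, hvi, hvj⟩ := cs.exists_mul_wordProd_of_isRightDescent hj i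
  have hlen' : cs.length (v * cs.wordProd l) = cs.length v + cs.length (cs.wordProd l) := by
    have := cs.length_mul_le v (cs.wordProd l)
    have := cs.length_wordProd_le l
    omega
  have hl : cs.IsReduced l := by
    rw [CoxeterSystem.IsReduced]
    omega
  have hli : ¬ cs.IsRightDescent (cs.wordProd l) i :=
    fun h => hw (cs.isRightDescent_mul_of_length_mul_eq hlen' h)
  have halt := CoxeterSystem.eq_alternatingWord_of_isReduced hl hmem
    fun h => hli (hl.isRightDescent_of_getLast?_eq h)
  have hr : M i j = 0 ∨ l.length < M i j := by
    rw [or_iff_not_imp_left]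
    intro hM
    rw [halt] at hl hli
    exact CoxeterSystem.lt_of_isReduced_alternatingWord hM hl hli
  obtain ⟨p, q, hp, hq, hpq⟩ := G.exists_π_alternatingWord_eq_smul_add_smul hij hr
  rw [← halt] at hpq
  rw [π_mul_apply, hpq, map_add, map_smul, map_smul]
  exact add_mem (Submodule.smul_mem _ ⟨p, hp⟩ (ih _ (hn ▸ hlt) hvi rfl))
    (Submodule.smul_mem _ ⟨q, hq⟩ (ih _ (hn ▸ hlt) hvj rfl))

theorem bil_simpleRoot_nonpos {i j : B} (hij : i ≠ j) : G.bil (G.α i) (G.α j) ≤ 0 := by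
  by_cases hM : M i j = 0
  · linarith [G.angle_infinite i j hij hM]
  · have h2 : (2 : ℝ) ≤ M i j := by
      have := M.off_diagonal i j hij
      exact_mod_cast (by omega : 2 ≤ M i j)
    rw [G.angle_finite i j hij hM, neg_nonpos]
    apply Real.cos_nonneg_of_mem_Icc
    constructor
    · linarith [show 0 ≤ Real.pi / M i j by positivity, Real.pi_pos]
    · exact div_le_div_of_nonneg_left Real.pi_pos.le two_pos h2

theorem eq_zero_of_sum_smul_simpleRoot_eq_zero {e : B → ℝ} (i : B) (he : ∀ b ≠ i, 0 ≤ e b)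
    (hsum : ∑ b, e b • G.α b = 0) (b : B) : e b = 0 := by
  classical
  refine G.pos_indep e (fun b => ?_) hsum b
  rcases eq_or_ne b i with rfl | hb
  -- pairing with `α b` gives `e b = -∑_{x ≠ b} e x B(α b, α x) ≥ 0`
  · have h0 := congrArg (G.bil (G.α b)) hsum
    rw [map_sum, map_zero, ← Finset.add_sum_erase _ _ (Finset.mem_univ b)] at h0
    simp only [map_smul, smul_eq_mul, G.norm_one, mul_one] at h0
    have : ∑ x ∈ Finset.univ.erase b, e x * G.bil (G.α b) (G.α x) ≤ 0 :=
      Finset.sum_nonpos fun x hx => have hxb := Finset.ne_of_mem_erase hx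
        mul_nonpos_of_nonneg_of_nonpos (he x hxb) (G.bil_simpleRoot_nonpos hxb.symm)
    linarith
  · exact he b hb

theorem eq_zero_of_mem_rootCone_of_neg_mem {x : V} (hx : x ∈ G.rootCone)
    (hnx : -x ∈ G.rootCone) : x = 0 := by
  obtain ⟨c, hc, rfl⟩ := G.mem_rootCone_iff.1 hx
  obtain ⟨d, hd, hcd⟩ := G.mem_rootCone_iff.1 hnx
  have hsum : ∑ b, (c b + d b) • G.α b = 0 := by
    simp only [add_smul, Finset.sum_add_distrib, hcd, add_neg_cancel]
  have hc0 : ∀ b, c b = 0 := fun b => by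
    linarith [hc b, hd b, G.pos_indep _ (fun b => add_nonneg (hc b) (hd b)) hsum b]
  simp [hc0]

theorem π_simpleRoot_mem_PhiPos {w : W} {i : B} (hw : ¬ cs.IsRightDescent w i) :
    G.π w (G.α i) ∈ G.PhiPos :=
  G.mem_PhiPos_iff.2 ⟨⟨w, i, rfl⟩, G.π_simpleRoot_mem_rootCone hw⟩

theorem mem_PhiPos_or_neg_mem_PhiPos {x : V} (hx : x ∈ G.Phi) : x ∈ G.PhiPos ∨ -x ∈ G.PhiPos := by
  obtain ⟨w, i, rfl⟩ := hx
  by_cases hw : cs.IsRightDescent w i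
  · right
    rw [cs.isRightDescent_iff_not_isRightDescent_mul] at hw
    simpa [π_simple_simpleRoot] using G.π_simpleRoot_mem_PhiPos hw
  · exact .inl (G.π_simpleRoot_mem_PhiPos hw)

theorem neg_notMem_PhiPos {x : V} (hx : x ∈ G.PhiPos) : -x ∉ G.PhiPos := fun hnx =>
  G.ne_zero_of_mem_Phi (G.mem_PhiPos_iff.1 hx).1 <|
    G.eq_zero_of_mem_rootCone_of_neg_mem (G.mem_PhiPos_iff.1 hx).2 (G.mem_PhiPos_iff.1 hnx).2

theorem eq_simpleRoot_of_neg_π_simple_mem_rootCone {β : V} {i : B} (hβ : β ∈ G.PhiPos)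
    (h : -G.π (cs.simple i) β ∈ G.rootCone) : β = G.α i := by
  classical
  obtain ⟨c, hc, hcβ⟩ := G.mem_rootCone_iff.1 (G.mem_PhiPos_iff.1 hβ).2
  obtain ⟨d, hd, hdβ⟩ := G.mem_rootCone_iff.1 h
  -- `β + (-sᵢ β) = 2 B(αᵢ, β) αᵢ`, so the coefficients of `β` off `i` vanish
  set t := 2 * G.bil (G.α i) β
  have hsum : ∑ b, (c b + d b - if b = i then t else 0) • G.α b = 0 := by
    simp only [sub_smul, add_smul, ite_smul, zero_smul, Finset.sum_sub_distrib,
      Finset.sum_add_distrib, Finset.sum_ite_eq', Finset.mem_univ, if_true, hcβ, hdβ,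
      G.simple_refl]
    abel
  have hcb : ∀ b ≠ i, c b = 0 := fun b hb => by
    have := G.eq_zero_of_sum_smul_simpleRoot_eq_zero i
      (fun b hb => by simp only [if_neg hb]; linarith [hc b, hd b]) hsum b
    simp only [if_neg hb] at this
    linarith [hc b, hd b]
  have hβi : β = c i • G.α i := by
    rw [← hcβ, Finset.sum_eq_single i (fun b _ hb => by rw [hcb b hb, zero_smul]) (by simp)]
  have hnorm : c i * c i = 1 := by
    simpa [hβi, G.norm_one] using G.bil_self_of_mem_Phi (G.mem_PhiPos_iff.1 hβ).1
  have hci : c i = 1 := by nlinarith [hc i]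
  rw [hβi, hci, one_smul]

theorem mem_N_iff {w : W} {x : V} : x ∈ G.N w ↔ x ∈ G.PhiPos ∧ -G.π w⁻¹ x ∈ G.PhiPos := by
  refine and_congr_right fun _ => ⟨?_, fun h => ⟨G.π w⁻¹ x, by simpa using h, by simp⟩⟩
  rintro ⟨y, hy, rfl⟩
  simpa using hy

theorem π_inv_apply_mem_PhiPos_of_notMem_N {w : W} {x : V} (hx : x ∈ G.PhiPos) (hxN : x ∉ G.N w) :
    G.π w⁻¹ x ∈ G.PhiPos :=
  (G.mem_PhiPos_or_neg_mem_PhiPos (G.π_apply_mem_Phi _ (G.mem_PhiPos_iff.1 hx).1)).resolve_right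
    fun h => hxN (G.mem_N_iff.2 ⟨hx, h⟩)

theorem N_subset_N_mul_simple {w : W} {i : B} (hw : ¬ cs.IsRightDescent w i) :
    G.N w ⊆ G.N (w * cs.simple i) := by
  intro x hx
  rw [mem_N_iff] at hx ⊢
  obtain ⟨hx, hβ⟩ := hx
  refine ⟨hx, ?_⟩
  have hsβ : -G.π (w * cs.simple i)⁻¹ x = G.π (cs.simple i) (-G.π w⁻¹ x) := by
    simp [mul_inv_rev, cs.inv_simple]
  rw [hsβ]
  refine (G.mem_PhiPos_or_neg_mem_PhiPos
    (G.π_apply_mem_Phi _ (G.mem_PhiPos_iff.1 hβ).1)).resolve_right fun hneg => ?_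
  have hαi := G.eq_simpleRoot_of_neg_π_simple_mem_rootCone hβ (G.mem_PhiPos_iff.1 hneg).2
  refine G.neg_notMem_PhiPos (G.π_simpleRoot_mem_PhiPos hw) ?_
  rwa [← hαi, map_neg, π_apply_π_inv_apply, neg_neg]

theorem isSeparable_iff {A : Set V} :
    G.IsSeparable A ↔ ∀ v ∈ coneOf A, v ∈ coneOf (G.PhiPos \ A) → v = 0 := by
  rw [IsSeparable, Set.eq_singleton_iff_unique_mem]
  exact and_iff_right ⟨zero_mem_coneOf _, zero_mem_coneOf _⟩ |>.trans
    ⟨fun h v hv hv' => h v ⟨hv, hv'⟩, fun h v hv => h v hv.1 hv.2⟩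

theorem isSeparable_N (w : W) : G.IsSeparable (G.N w) := by
  rw [isSeparable_iff]
  intro v hN hC
  have hneg : -G.π w⁻¹ v ∈ G.rootCone :=
    map_mem_of_mem_coneOf (-(G.π w⁻¹ : V →ₗ[ℝ] V))
      (fun x hx => (G.mem_PhiPos_iff.1 (G.mem_N_iff.1 hx).2).2) hN
  have hpos : G.π w⁻¹ v ∈ G.rootCone :=
    map_mem_of_mem_coneOf (G.π w⁻¹ : V →ₗ[ℝ] V)
      (fun x hx => (G.mem_PhiPos_iff.1 (G.π_inv_apply_mem_PhiPos_of_notMem_N hx.1 hx.2)).2) hC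
  simpa using congrArg (G.π w) (G.eq_zero_of_mem_rootCone_of_neg_mem hpos hneg)

theorem isSeparable_iUnion_of_directed {ι : Type*} [Nonempty ι] {A : ι → Set V}
    (hdir : Directed (· ⊆ ·) A) (hA : ∀ k, G.IsSeparable (A k)) : G.IsSeparable (⋃ k, A k) := by
  rw [isSeparable_iff]
  intro v hv hv'
  obtain ⟨k, hk⟩ := mem_coneOf_iUnion_of_directed hdir hv
  exact G.isSeparable_iff.1 (hA k) v hk
    (coneOf_mono (Set.sdiff_subset_sdiff_right (Set.subset_iUnion A k)) hv')

end GeomRep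

/-- The inversion set of an infinite reduced word is separable. -/
theorem stmt16 {B : Type*} [Fintype B] {W : Type*} [Group W]
    {M : CoxeterMatrix B} {cs : CoxeterSystem M W}
    {V : Type*} [AddCommGroup V] [Module ℝ V] (G : GeomRep M cs V)
    (ω : ℕ → B) (hred : ∀ n, cs.IsReduced (List.ofFn fun i : Fin n => ω i)) :
    G.IsSeparable (⋃ n : ℕ, G.N (cs.wordProd (List.ofFn fun i : Fin n => ω i))) := by
  set w : ℕ → W := fun n => cs.wordProd (List.ofFn fun i : Fin n => ω i)
  have hw : ∀ n, w (n + 1) = w n * cs.simple (ω n) := fun n => by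
    simp only [w, List.ofFn_succ', cs.wordProd_concat, Fin.val_castSucc, Fin.val_last]
  have hasc : ∀ n, ¬ cs.IsRightDescent (w n) (ω n) := fun n => by
    rw [cs.not_isRightDescent_iff, ← hw, (hred n).eq, (hred (n + 1)).eq]
    simp
  have hmono : Monotone fun n => G.N (w n) :=
    monotone_nat_of_le_succ fun n => hw n ▸ G.N_subset_N_mul_simple (hasc n)
  exact G.isSeparable_iUnion_of_directed hmono.directed_le fun n => G.isSeparable_N (w n)
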